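/- Let b ≥ 2 be even. Then every arithmetic progression with common difference b−1 consisting entirely of b-anti-Niven numbers has length at most 2b+1. -/
import Mathlib


/-- Base-`b` digit sum of `n`. -/
def sdig (b n : ℕ) : ℕ := (Nat.digits b n).sum

/-- A positive integer `n` is `b`-anti-Niven if it is coprime to its base-`b` digit sum. -/
def AntiNiven (b n : ℕ) : Prop := 0 < n ∧ Nat.gcd n (sdig b n) = 1

lemma sdig_mul_add {b : ℕ} (hb : 2 ≤ b) (x c : ℕ) (hc : c < b) :
    sdig b (b * x + c) = sdig b x + c := by
  rcases Nat.eq_zero_or_pos (b * x + c) with h0 | hpos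
  · have hbx : b * x = 0 := by omega
    have hx : x = 0 := by
      rcases Nat.mul_eq_zero.mp hbx with h | h
      · omega
      · exact h
    have hc0 : c = 0 := by omega
    rw [hx, hc0]; simp [sdig]
  · unfold sdig
    rw [Nat.digits_def' (by omega : 1 < b) hpos]
    have hmod : (b * x + c) % b = c := by
      rw [Nat.mul_add_mod, Nat.mod_eq_of_lt hc]
    have hdiv : (b * x + c) / b = x := by
      rw [Nat.mul_add_div (by omega), Nat.div_eq_of_lt hc, add_zero]
    rw [hmod, hdiv, List.sum_cons]; ring

lemma sdig_succ {b : ℕ} (hb : 2 ≤ b) (x : ℕ) (h : x % b + 1 < b) :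
    sdig b (x + 1) = sdig b x + 1 := by
  have hx := Nat.div_add_mod x b
  have h1 := sdig_mul_add hb (x / b) (x % b) (Nat.mod_lt x (by omega))
  have h2 := sdig_mul_add hb (x / b) (x % b + 1) h
  have e1 : sdig b (x + 1) = sdig b (x / b) + (x % b + 1) := by
    rw [show x + 1 = b * (x / b) + (x % b + 1) by omega]; exact h2
  have e2 : sdig b x = sdig b (x / b) + x % b := by
    conv_lhs => rw [← hx]
    exact h1
  omega

theorem stmt_12 (b : ℕ) (hb : 2 ≤ b) (heven : Even b) :
    ∀ n t : ℕ, (∀ j : ℕ, j < t → AntiNiven b (n + j * (b - 1))) → t ≤ 2 * b + 1 := by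
  obtain ⟨e, he⟩ := heven
  obtain ⟨d, rfl⟩ : ∃ d, b = 2 * d + 2 := ⟨e - 1, by omega⟩
  have hb2 : (2 : ℕ) ≤ 2 * d + 2 := by omega
  intro n t hyp
  by_contra hcon
  push_neg at hcon
  have hsub : 2 * d + 2 - 1 = 2 * d + 1 := by omega
  simp only [hsub] at hyp
  -- pick j0 ∈ {0,1} making the term even
  obtain ⟨j0, hj0, hm⟩ : ∃ j0, j0 ≤ 1 ∧ (n + j0 * (2 * d + 1)) % 2 = 0 := by
    by_cases h : n % 2 = 0
    · exact ⟨0, by omega, by omega⟩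
    · exact ⟨1, le_refl 1, by omega⟩
  obtain ⟨Q, r, hQr, hrlt⟩ :
      ∃ Q r, n + j0 * (2 * d + 1) = (2 * d + 2) * Q + r ∧ r < 2 * d + 2 :=
    ⟨_, _, (Nat.div_add_mod _ _).symm, Nat.mod_lt _ (by omega)⟩
  have hQeven : 2 ∣ (2 * d + 2) * Q := ⟨(d + 1) * Q, by ring⟩
  have hr2 : r % 2 = 0 := by omega
  have hrle : r ≤ 2 * d := by omega
  -- the four key terms
  have e1 : n + (j0 + r) * (2 * d + 1) = (2 * d + 2) * (Q + r) := by
    rw [show n + (j0 + r) * (2 * d + 1)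
        = (n + j0 * (2 * d + 1)) + r * (2 * d + 1) by ring, hQr]; ring
  have e2 : n + (j0 + r + 2) * (2 * d + 1) = (2 * d + 2) * (Q + r + 1) + 2 * d := by
    rw [show n + (j0 + r + 2) * (2 * d + 1)
        = (n + j0 * (2 * d + 1)) + (r + 2) * (2 * d + 1) by ring, hQr]; ring
  have e3 : n + (j0 + r + 2 * d + 2) * (2 * d + 1)
      = (2 * d + 2) * (Q + r + 2 * d + 1) := by
    rw [show n + (j0 + r + 2 * d + 2) * (2 * d + 1)
        = (n + j0 * (2 * d + 1)) + (r + 2 * d + 2) * (2 * d + 1) by ring, hQr]; ring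
  have e4 : n + (j0 + r + 2 * d + 4) * (2 * d + 1)
      = (2 * d + 2) * (Q + r + 2 * d + 2) + 2 * d := by
    rw [show n + (j0 + r + 2 * d + 4) * (2 * d + 1)
        = (n + j0 * (2 * d + 1)) + (r + 2 * d + 4) * (2 * d + 1) by ring, hQr]; ring
  -- every even term in range has odd digit sum
  have odd_s : ∀ j, j < t → (n + j * (2 * d + 1)) % 2 = 0 →
      sdig (2 * d + 2) (n + j * (2 * d + 1)) % 2 = 1 := by
    intro j hj hev
    have hgcd := (hyp j hj).2
    by_contra hodd
    have h2 : 2 ∣ Nat.gcd (n + j * (2 * d + 1)) (sdig (2 * d + 2) (n + j * (2 * d + 1))) :=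
      Nat.dvd_gcd (by omega) (by omega)
    omega
  have dvd1 : 2 ∣ (2 * d + 2) * (Q + r) := ⟨(d + 1) * (Q + r), by ring⟩
  have dvd2 : 2 ∣ (2 * d + 2) * (Q + r + 1) := ⟨(d + 1) * (Q + r + 1), by ring⟩
  have dvd3 : 2 ∣ (2 * d + 2) * (Q + r + 2 * d + 1) := ⟨(d + 1) * (Q + r + 2 * d + 1), by ring⟩
  have dvd4 : 2 ∣ (2 * d + 2) * (Q + r + 2 * d + 2) := ⟨(d + 1) * (Q + r + 2 * d + 2), by ring⟩
  have sm0 := sdig_mul_add hb2 (Q + r) 0 (by omega)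
  have sm1 := sdig_mul_add hb2 (Q + r + 1) (2 * d) (by omega)
  have sm2 := sdig_mul_add hb2 (Q + r + 2 * d + 1) 0 (by omega)
  have sm3 := sdig_mul_add hb2 (Q + r + 2 * d + 2) (2 * d) (by omega)
  rw [add_zero] at sm0 sm2
  have o1 : sdig (2 * d + 2) (Q + r) % 2 = 1 := by
    have := odd_s (j0 + r) (by omega) (by rw [e1]; omega)
    rw [e1, sm0] at this; exact this
  have o2 : sdig (2 * d + 2) (Q + r + 1) % 2 = 1 := by
    have := odd_s (j0 + r + 2) (by omega) (by rw [e2]; omega)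
    rw [e2, sm1] at this; omega
  have o3 : sdig (2 * d + 2) (Q + r + 2 * d + 1) % 2 = 1 := by
    have := odd_s (j0 + r + 2 * d + 2) (by omega) (by rw [e3]; omega)
    rw [e3, sm2] at this; exact this
  have o4 : sdig (2 * d + 2) (Q + r + 2 * d + 2) % 2 = 1 := by
    have := odd_s (j0 + r + 2 * d + 4) (by omega) (by rw [e4]; omega)
    rw [e4, sm3] at this; omega
  -- now find a carry-free increment
  have hmlt : (Q + r) % (2 * d + 2) < 2 * d + 2 := Nat.mod_lt _ (by omega)
  by_cases hu : (Q + r) % (2 * d + 2) = 2 * d + 1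
  · have hmod : (Q + r + 2 * d + 1) % (2 * d + 2) = 2 * d := by
      rw [show Q + r + 2 * d + 1 = (Q + r) + (2 * d + 1) by ring, Nat.add_mod, hu,
        Nat.mod_eq_of_lt (show 2 * d + 1 < 2 * d + 2 by omega),
        show 2 * d + 1 + (2 * d + 1) = 2 * d + (2 * d + 2) by ring, Nat.add_mod_right]
      exact Nat.mod_eq_of_lt (by omega)
    have hstep := sdig_succ hb2 (Q + r + 2 * d + 1) (by omega)
    rw [show Q + r + 2 * d + 1 + 1 = Q + r + 2 * d + 2 by ring] at hstep
    omega
  · have hstep := sdig_succ hb2 (Q + r) (by omega)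
    omega
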